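/- Let A, B ∈ ℂ^{n×n} admit a Weierstrass decomposition T·A·S = diag(J, I_{n−d}), T·B·S = diag(I_d, N) with N nilpotent, and suppose J is block diagonal, J = diag(J₁, J₂), with J₁ ∈ ℂ^{s×s} and J₂ ∈ ℂ^{(d−s)×(d−s)}. Let γ ∈ ℂ and ρ > 0 be such that every eigenvalue of J₁ lies strictly inside the circle |z − γ| = ρ and every eigenvalue of J₂ lies strictly outside it. Then zB − A is invertible for every z on the circle and (1/(2π√−1)) ∮_{|z−γ|=ρ} (zB − A)^{-1} B dz = S · diag(I_s, 0_{(n−s)×(n−s)}) · S^{-1} = S_{(:,1:s)} (S^{-1})_{(1:s,:)}, where S_{(:,1:s)} denotes the first s columns of S and (S^{-1})_{(1:s,:)} the first s rows of S^{-1}. -/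

import Mathlib

/-!
Conjugating by `T` and `S` turns the pencil into block-diagonal form,
`T (zB - A) S = diag(z - J₁, z - J₂, zN - 1)`, hence
`(zB - A)⁻¹ B = S · diag((z - J₁)⁻¹, (z - J₂)⁻¹, (zN - 1)⁻¹ N) · S⁻¹`, and the contour integral can
be taken block by block. Since `N` is nilpotent, `zN - 1` is invertible for every `z`, and the
spectrum of `J₂` lies outside the closed disc, so those two blocks are holomorphic on the disc and
integrate to `0`. For `J₁`, the substitution `w = 1 / (z - γ)` turns `(z - J₁)⁻¹ dz` into
`w⁻¹ (1 - w (J₁ - γ))⁻¹ dw` on the circle of radius `ρ⁻¹`. The function `(1 - w (J₁ - γ))⁻¹` is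
holomorphic on the closed disc of that radius because the spectrum of `J₁` lies inside the original
circle, so Cauchy's formula at `w = 0` gives `2πi I`.
-/

open Matrix Metric Set Real

section Pencil

variable {n R : Type*} [Fintype n] [DecidableEq n] [CommRing R]

theorem inv_eq_mul_inv_conj_mul (X : Matrix n n R) {S T : Matrix n n R} (hS : IsUnit S)
    (hT : IsUnit T) : X⁻¹ = S * (T * X * S)⁻¹ * T := by
  rw [Matrix.mul_inv_rev, Matrix.mul_inv_rev,
    mul_nonsing_inv_cancel_left _ _ ((isUnit_iff_isUnit_det S).1 hS),
    nonsing_inv_mul_cancel_right _ _ ((isUnit_iff_isUnit_det T).1 hT)]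

theorem mul_smul_sub_mul (A B S T : Matrix n n R) (z : R) :
    T * (z • B - A) * S = z • (T * B * S) - T * A * S := by
  rw [Matrix.mul_sub, Matrix.sub_mul, mul_smul_comm, smul_mul_assoc]

theorem smul_sub_inv_mul_eq (A B : Matrix n n R) {S T : Matrix n n R} (hS : IsUnit S)
    (hT : IsUnit T) (z : R) :
    (z • B - A)⁻¹ * B = S * (z • (T * B * S) - T * A * S)⁻¹ * (T * B * S * S⁻¹) := by
  rw [inv_eq_mul_inv_conj_mul (z • B - A) hS hT, mul_smul_sub_mul]
  simp only [Matrix.mul_assoc, mul_nonsing_inv _ ((isUnit_iff_isUnit_det S).1 hS), Matrix.mul_one]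

end Pencil

section FromDiagBlocks

variable {m n o R : Type*}

/-- `diag(X, Y)`, with rows and columns indexed by `o` through `e`. -/
def fromDiagBlocks [Zero R] (e : m ⊕ n ≃ o) (X : Matrix m m R) (Y : Matrix n n R) :
    Matrix o o R :=
  reindex e e (fromBlocks X 0 0 Y)

theorem smul_fromDiagBlocks_sub_fromDiagBlocks [Ring R] (e : m ⊕ n ≃ o) (z : R)
    (X X' : Matrix m m R) (Y Y' : Matrix n n R) :
    z • fromDiagBlocks e X Y - fromDiagBlocks e X' Y' =
      fromDiagBlocks e (z • X - X') (z • Y - Y') := by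
  ext i j
  simp only [fromDiagBlocks, reindex_apply, Matrix.submatrix_apply, Matrix.sub_apply,
    Matrix.smul_apply]
  generalize e.symm i = a
  generalize e.symm j = b
  rcases a with a | a <;> rcases b with b | b <;> simp

theorem fromDiagBlocks_one [Zero R] [One R] [DecidableEq m] [DecidableEq n] [DecidableEq o]
    (e : m ⊕ n ≃ o) : fromDiagBlocks e (1 : Matrix m m R) 1 = 1 := by
  rw [fromDiagBlocks, fromBlocks_one, reindex_apply, submatrix_one_equiv]

theorem fromDiagBlocks_mul_fromDiagBlocks [NonUnitalNonAssocSemiring R] [Fintype m] [Fintype n]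
    [Fintype o] (e : m ⊕ n ≃ o) (X X' : Matrix m m R) (Y Y' : Matrix n n R) :
    fromDiagBlocks e X Y * fromDiagBlocks e X' Y' = fromDiagBlocks e (X * X') (Y * Y') := by
  rw [fromDiagBlocks, fromDiagBlocks, fromDiagBlocks, reindex_apply, reindex_apply, reindex_apply,
    submatrix_mul_equiv, fromBlocks_multiply]
  simp

theorem smul_fromDiagBlocks [MulZeroClass R] (e : m ⊕ n ≃ o) (c : R)
    (X : Matrix m m R) (Y : Matrix n n R) :
    c • fromDiagBlocks e X Y = fromDiagBlocks e (c • X) (c • Y) := by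
  ext i j
  simp only [fromDiagBlocks, reindex_apply, Matrix.submatrix_apply, Matrix.smul_apply]
  generalize e.symm i = a
  generalize e.symm j = b
  rcases a with a | a <;> rcases b with b | b <;> simp

section Invertible

variable [CommRing R] [Fintype m] [DecidableEq m] [Fintype n] [DecidableEq n] [Fintype o]
  [DecidableEq o]

theorem det_fromDiagBlocks (e : m ⊕ n ≃ o) (X : Matrix m m R) (Y : Matrix n n R) :
    (fromDiagBlocks e X Y).det = X.det * Y.det := by
  rw [fromDiagBlocks, det_reindex_self, det_fromBlocks_zero₂₁]

theorem isUnit_fromDiagBlocks_iff (e : m ⊕ n ≃ o) {X : Matrix m m R} {Y : Matrix n n R} :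
    IsUnit (fromDiagBlocks e X Y) ↔ IsUnit X ∧ IsUnit Y := by
  simp only [isUnit_iff_isUnit_det, det_fromDiagBlocks, IsUnit.mul_iff]

theorem inv_fromDiagBlocks (e : m ⊕ n ≃ o) {X : Matrix m m R} {Y : Matrix n n R}
    (h : IsUnit X ↔ IsUnit Y) : (fromDiagBlocks e X Y)⁻¹ = fromDiagBlocks e X⁻¹ Y⁻¹ := by
  rw [fromDiagBlocks, fromDiagBlocks, inv_reindex, inv_fromBlocks_zero₂₁_of_isUnit_iff _ _ _ h]
  simp

end Invertible

theorem fromDiagBlocks_diagonal [Zero R] [DecidableEq m] [DecidableEq n] [DecidableEq o]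
    (e : m ⊕ n ≃ o) (v : m → R) (w : n → R) :
    fromDiagBlocks e (diagonal v) (diagonal w) = diagonal fun i => Sum.elim v w (e.symm i) := by
  rw [fromDiagBlocks, fromBlocks_diagonal, reindex_apply, submatrix_diagonal_equiv]
  rfl

end FromDiagBlocks

def finSumSubEquiv {k n : ℕ} (h : k ≤ n) : Fin k ⊕ Fin (n - k) ≃ Fin n :=
  finSumFinEquiv.trans (finCongr (Nat.add_sub_cancel' h))

section FinSumSubEquiv

variable {k n : ℕ} (h : k ≤ n)

@[simp]
theorem finSumSubEquiv_apply_inl (a : Fin k) : finSumSubEquiv h (.inl a) = Fin.castLE h a := by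
  simp [finSumSubEquiv, Fin.ext_iff]

@[simp]
theorem finSumSubEquiv_apply_inr_val (b : Fin (n - k)) :
    (finSumSubEquiv h (.inr b) : ℕ) = k + b := by
  simp [finSumSubEquiv]

theorem Sum.elim_finSumSubEquiv_symm {α : Type*} (v : Fin k → α) (w : Fin (n - k) → α)
    (i : Fin n) :
    Sum.elim v w ((finSumSubEquiv h).symm i) =
      if hi : (i : ℕ) < k then v ⟨i, hi⟩ else w ⟨i - k, by omega⟩ := by
  split_ifs with hi
  · rw [show (finSumSubEquiv h).symm i = .inl ⟨i, hi⟩ by simp [Equiv.symm_apply_eq]]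
    rfl
  · rw [show (finSumSubEquiv h).symm i = .inr ⟨i - k, by omega⟩ by
      rw [Equiv.symm_apply_eq, Fin.ext_iff, finSumSubEquiv_apply_inr_val]
      exact (Nat.add_sub_cancel' (not_lt.1 hi)).symm]
    rfl

theorem fromDiagBlocks_finSumSubEquiv_one_zero {R : Type*} [Semiring R] :
    fromDiagBlocks (finSumSubEquiv h) (1 : Matrix (Fin k) (Fin k) R) 0 =
      diagonal fun i : Fin n => if (i : ℕ) < k then 1 else 0 := by
  rw [← diagonal_one, ← diagonal_zero, fromDiagBlocks_diagonal]
  congr 1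
  funext i
  rw [Sum.elim_finSumSubEquiv_symm]
  split_ifs <;> rfl

theorem mul_diagonal_ite_lt_mul {l o R : Type*} [Semiring R] (X : Matrix l (Fin n) R)
    (Y : Matrix (Fin n) o R) :
    X * diagonal (fun i : Fin n => if (i : ℕ) < k then (1 : R) else 0) * Y =
      X.submatrix id (Fin.castLE h) * Y.submatrix (Fin.castLE h) id := by
  ext i j
  rw [mul_apply, mul_apply, ← (finSumSubEquiv h).sum_comp, Fintype.sum_sum_type]
  simp [mul_diagonal]

end FinSumSubEquiv

theorem fromDiagBlocks_fromDiagBlocks_one_zero {R : Type*} [Semiring R] {s d n : ℕ}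
    (hs : s ≤ d) (hd : d ≤ n) :
    fromDiagBlocks (finSumSubEquiv hd)
        (fromDiagBlocks (finSumSubEquiv hs) (1 : Matrix (Fin s) (Fin s) R) 0) 0 =
      fromDiagBlocks (finSumSubEquiv (hs.trans hd)) 1 0 := by
  rw [fromDiagBlocks_finSumSubEquiv_one_zero, fromDiagBlocks_finSumSubEquiv_one_zero,
    ← diagonal_zero, fromDiagBlocks_diagonal]
  congr 1
  funext i
  rw [Sum.elim_finSumSubEquiv_symm]
  split_ifs <;> first | rfl | omega

section Holomorphy

variable {m : Type*}

theorem differentiable_det [Fintype m] [DecidableEq m] {G : ℂ → Matrix m m ℂ}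
    (hG : ∀ a b, Differentiable ℂ fun z => G z a b) :
    Differentiable ℂ fun z => (G z).det := by
  simp only [det_apply']
  exact Differentiable.fun_sum fun σ _ =>
    (Differentiable.fun_finsetProd fun i _ => hG _ _).const_mul _

/-- By Cramer's rule `G⁻¹ = (det G)⁻¹ • adj G`. -/
theorem differentiableAt_inv_apply [Fintype m] [DecidableEq m] {G : ℂ → Matrix m m ℂ}
    (hG : ∀ a b, Differentiable ℂ fun z => G z a b) {z₀ : ℂ} (hz : (G z₀).det ≠ 0) (a b : m) :
    DifferentiableAt ℂ (fun z => (G z)⁻¹ a b) z₀ := by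
  have hadj : Differentiable ℂ fun z => (G z).adjugate a b := by
    simp only [adjugate_apply]
    refine differentiable_det fun i j => ?_
    simp only [updateRow_apply]
    split_ifs
    exacts [differentiable_const _, hG i j]
  simp only [inv_def, Matrix.smul_apply, Ring.inverse_eq_inv', smul_eq_mul]
  exact ((differentiable_det hG z₀).inv hz).mul (hadj z₀)

theorem differentiable_smul_sub_apply (X Y : Matrix m m ℂ) (a b : m) :
    Differentiable ℂ fun z : ℂ => (z • X - Y) a b := by
  simp only [Matrix.sub_apply, Matrix.smul_apply, smul_eq_mul]
  fun_prop

theorem differentiable_one_sub_smul_apply [DecidableEq m] (X : Matrix m m ℂ) (a b : m) :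
    Differentiable ℂ fun z : ℂ => (1 - z • X) a b := by
  simp only [Matrix.sub_apply, Matrix.smul_apply, smul_eq_mul]
  fun_prop

end Holomorphy

/-- The substitution `w = 1 / (z - c)`: it maps the circle `C(c, R)` onto `C(0, R⁻¹)`, reversing
the orientation, and `dz = -w⁻² dw`. -/
theorem circleIntegral_eq_circleIntegral_inv {E : Type*} [NormedAddCommGroup E]
    [NormedSpace ℂ E] (f : ℂ → E) (c : ℂ) (R : ℝ) :
    (∮ z in C(c, R), f z) = ∮ w in C(0, R⁻¹), (w ^ 2)⁻¹ • f (c + w⁻¹) := by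
  set F : ℝ → E := fun θ => deriv (circleMap c R) θ • f (circleMap c R θ)
  have hF : Function.Periodic F (2 * π) := fun θ => by
    simp [F, periodic_circleMap c R θ, periodic_circleMap 0 R θ]
  calc (∮ z in C(c, R), f z) = ∫ θ in 0..2 * π, F (-θ) := by
        have := hF.intervalIntegral_add_eq (-(2 * π)) 0
        rw [neg_add_cancel, zero_add] at this
        rw [intervalIntegral.integral_comp_neg F, neg_zero, this]
        rfl
    _ = _ := by
        refine intervalIntegral.integral_congr fun θ _ => ?_
        have hw : circleMap 0 R (-θ) = (circleMap 0 R⁻¹ θ)⁻¹ := by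
          simpa using (circleMap_zero_inv R⁻¹ θ).symm
        have hc : circleMap c R (-θ) = c + circleMap 0 R (-θ) := by simp [circleMap]
        simp only [F, deriv_circleMap, smul_smul, hc, hw]
        congr 1
        rcases eq_or_ne (circleMap 0 R⁻¹ θ) 0 with h | h
        · simp [h]
        · field_simp

noncomputable def matrixCircleIntegral {m n : Type*} (f : ℂ → Matrix m n ℂ) (c : ℂ) (R : ℝ) :
    Matrix m n ℂ :=
  of fun i j => ∮ z in C(c, R), f z i j

section MatrixCircleIntegral

variable {l m n o : Type*} {c : ℂ} {R : ℝ}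

@[simp]
theorem matrixCircleIntegral_apply (f : ℂ → Matrix m n ℂ) (i : m) (j : n) :
    matrixCircleIntegral f c R i j = ∮ z in C(c, R), f z i j :=
  rfl

theorem matrixCircleIntegral_congr {f g : ℂ → Matrix m n ℂ} (hR : 0 ≤ R)
    (h : EqOn f g (sphere c R)) : matrixCircleIntegral f c R = matrixCircleIntegral g c R := by
  ext i j
  exact circleIntegral.integral_congr hR fun z hz => congrFun (congrFun (h hz) i) j

theorem matrixCircleIntegral_fromDiagBlocks (e : m ⊕ n ≃ o) (f : ℂ → Matrix m m ℂ)
    (g : ℂ → Matrix n n ℂ) :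
    matrixCircleIntegral (fun z => fromDiagBlocks e (f z) (g z)) c R =
      fromDiagBlocks e (matrixCircleIntegral f c R) (matrixCircleIntegral g c R) := by
  ext i j
  simp only [matrixCircleIntegral_apply, fromDiagBlocks, reindex_apply, Matrix.submatrix_apply]
  generalize e.symm i = a
  generalize e.symm j = b
  rcases a with a | a <;> rcases b with b | b <;> simp [circleIntegral]

theorem matrixCircleIntegral_mul_mul [Fintype m] [Fintype n] {f : ℂ → Matrix m n ℂ}
    (X : Matrix l m ℂ) (Y : Matrix n o ℂ) (hf : ∀ i j, CircleIntegrable (fun z => f z i j) c R) :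
    matrixCircleIntegral (fun z => X * f z * Y) c R = X * matrixCircleIntegral f c R * Y := by
  ext i j
  have hexpand : ∀ F : Matrix m n ℂ,
      (X * F * Y) i j = ∑ p : m × n, X i p.1 * Y p.2 j * F p.1 p.2 := by
    intro F
    simp only [mul_apply, Finset.sum_mul, Fintype.sum_prod_type]
    rw [Finset.sum_comm]
    exact Finset.sum_congr rfl fun _ _ => Finset.sum_congr rfl fun _ _ => by ring
  simp only [matrixCircleIntegral_apply, hexpand]
  rw [circleIntegral.integral_fun_sum fun p _ => (hf p.1 p.2).const_smul]
  simp only [circleIntegral.integral_const_mul]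

theorem matrixCircleIntegral_inv_fromDiagBlocks [Fintype m] [DecidableEq m] [Fintype n]
    [DecidableEq n] [Fintype o] [DecidableEq o] (e : m ⊕ n ≃ o) {X : ℂ → Matrix m m ℂ}
    {Y : ℂ → Matrix n n ℂ} (hR : 0 ≤ R) (hX : ∀ z ∈ sphere c R, IsUnit (X z))
    (hY : ∀ z ∈ sphere c R, IsUnit (Y z)) :
    matrixCircleIntegral (fun z => (fromDiagBlocks e (X z) (Y z))⁻¹) c R =
      fromDiagBlocks e (matrixCircleIntegral (fun z => (X z)⁻¹) c R)
        (matrixCircleIntegral (fun z => (Y z)⁻¹) c R) := by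
  rw [← matrixCircleIntegral_fromDiagBlocks]
  exact matrixCircleIntegral_congr hR fun z hz =>
    inv_fromDiagBlocks e (iff_of_true (hX z hz) (hY z hz))

end MatrixCircleIntegral

theorem smul_one_sub_eq_inv_smul {m : Type*} [DecidableEq m] (M : Matrix m m ℂ) (c : ℂ) {w : ℂ}
    (hw : w ≠ 0) : (c + w⁻¹) • (1 : Matrix m m ℂ) - M = w⁻¹ • (1 - w • (M - c • 1)) := by
  rw [smul_sub, smul_smul, inv_mul_cancel₀ hw, one_smul, add_smul]
  abel

section Resolvent

variable {m : Type*} [Fintype m] [DecidableEq m] {c : ℂ} {R : ℝ}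

theorem differentiableAt_smul_sub_inv_apply {X Y : Matrix m m ℂ} {z : ℂ} (h : IsUnit (z • X - Y))
    (a b : m) : DifferentiableAt ℂ (fun z => (z • X - Y)⁻¹ a b) z :=
  differentiableAt_inv_apply (differentiable_smul_sub_apply X Y)
    ((isUnit_iff_isUnit_det _).1 h).ne_zero a b

theorem circleIntegrable_smul_sub_inv_apply {X Y : Matrix m m ℂ} (hR : 0 ≤ R)
    (h : ∀ z ∈ sphere c R, IsUnit (z • X - Y)) (a b : m) :
    CircleIntegrable (fun z => (z • X - Y)⁻¹ a b) c R :=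
  ContinuousOn.circleIntegrable hR fun z hz =>
    (differentiableAt_smul_sub_inv_apply (h z hz) a b).continuousAt.continuousWithinAt

theorem matrixCircleIntegral_smul_sub_inv_eq_zero {X Y : Matrix m m ℂ} (hR : 0 ≤ R)
    (h : ∀ z ∈ closedBall c R, IsUnit (z • X - Y)) :
    matrixCircleIntegral (fun z => (z • X - Y)⁻¹) c R = 0 := by
  ext a b
  have hd z (hz : z ∈ closedBall c R) := differentiableAt_smul_sub_inv_apply (h z hz) a b
  exact Complex.circleIntegral_eq_zero_of_differentiable_on_off_countable hR countable_empty
    (fun z hz => (hd z hz).continuousAt.continuousWithinAt)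
    fun z hz => hd z (ball_subset_closedBall hz.1)

theorem det_one_sub_smul_ne_zero {M : Matrix m m ℂ} (hR : 0 < R)
    (hM : ∀ μ : ℂ, (μ • (1 : Matrix m m ℂ) - M).det = 0 → ‖μ - c‖ < R) {w : ℂ}
    (hw : ‖w‖ ≤ R⁻¹) : (1 - w • (M - c • 1)).det ≠ 0 := by
  rcases eq_or_ne w 0 with rfl | hw₀
  · simp
  intro h
  have hμ := hM (c + w⁻¹) (by rw [smul_one_sub_eq_inv_smul M c hw₀, det_smul, h, mul_zero])
  rw [add_sub_cancel_left, norm_inv] at hμ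
  exact hμ.not_ge ((le_inv_comm₀ (norm_pos_iff.2 hw₀) hR).1 hw)

theorem matrixCircleIntegral_resolvent {M : Matrix m m ℂ} (hR : 0 < R)
    (hM : ∀ μ : ℂ, (μ • (1 : Matrix m m ℂ) - M).det = 0 → ‖μ - c‖ < R) :
    matrixCircleIntegral (fun z => (z • (1 : Matrix m m ℂ) - M)⁻¹) c R =
      (2 * π * Complex.I : ℂ) • 1 := by
  ext a b
  set E := M - c • (1 : Matrix m m ℂ)
  set g : ℂ → ℂ := fun w => (1 - w • E)⁻¹ a b
  have hR' : 0 < R⁻¹ := inv_pos.2 hR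
  have hg : DiffContOnCl ℂ g (ball 0 R⁻¹) := by
    refine DifferentiableOn.diffContOnCl fun w hw => ?_
    rw [closure_ball _ hR'.ne', mem_closedBall_zero_iff] at hw
    exact (differentiableAt_inv_apply (differentiable_one_sub_smul_apply E)
      (det_one_sub_smul_ne_zero hR hM hw) a b).differentiableWithinAt
  calc matrixCircleIntegral (fun z => (z • (1 : Matrix m m ℂ) - M)⁻¹) c R a b
      = ∮ w in C(0, R⁻¹), (w ^ 2)⁻¹ • ((c + w⁻¹) • (1 : Matrix m m ℂ) - M)⁻¹ a b :=
        circleIntegral_eq_circleIntegral_inv (fun z => (z • (1 : Matrix m m ℂ) - M)⁻¹ a b) c R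
    _ = ∮ w in C(0, R⁻¹), (w - 0)⁻¹ • g w := by
        refine circleIntegral.integral_congr hR'.le fun w hw => ?_
        have hw₀ : w ≠ 0 := ne_of_mem_sphere hw hR'.ne'
        have hdet := det_one_sub_smul_ne_zero hR hM (mem_sphere_zero_iff_norm.1 hw).le
        have hinv : (w⁻¹ • (1 - w • E))⁻¹ = w • (1 - w • E)⁻¹ := by
          refine inv_eq_right_inv ?_
          rw [Matrix.smul_mul, Matrix.mul_smul, smul_smul, inv_mul_cancel₀ hw₀, one_smul,
            mul_nonsing_inv _ (isUnit_iff_ne_zero.2 hdet)]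
        rw [smul_one_sub_eq_inv_smul M c hw₀, hinv, Matrix.smul_apply, smul_smul, sub_zero]
        congr 1
        field_simp
    _ = (2 * π * Complex.I) • g 0 := hg.circleIntegral_sub_inv_smul (mem_ball_self hR')
    _ = _ := by simp [g, one_apply]

end Resolvent

theorem isUnit_smul_one_sub {m : Type*} [Fintype m] [DecidableEq m] {K : Type*} [Field K]
    {M : Matrix m m K} {P : K → Prop} (hM : ∀ μ : K, (μ • (1 : Matrix m m K) - M).det = 0 → P μ)
    {z : K} (hz : ¬P z) : IsUnit (z • (1 : Matrix m m K) - M) :=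
  (isUnit_iff_isUnit_det _).2 <| isUnit_iff_ne_zero.2 fun h => hz (hM z h)

section Weierstrass

variable {ι p q r t : Type*} [Fintype ι] [DecidableEq ι] [Fintype p] [DecidableEq p] [Fintype q]
  [DecidableEq q] [Fintype r] [DecidableEq r] [Fintype t] [DecidableEq t] (e₂ : p ⊕ q ≃ r)
  (e₁ : r ⊕ t ≃ ι) {J₁ : Matrix p p ℂ} {J₂ : Matrix q q ℂ} {N : Matrix t t ℂ} {γ : ℂ} {ρ : ℝ}

theorem matrixCircleIntegral_inv_fromDiagBlocks_weierstrass (hN : IsNilpotent N) (hρ : 0 < ρ)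
    (hin : ∀ μ : ℂ, (μ • (1 : Matrix p p ℂ) - J₁).det = 0 → ‖μ - γ‖ < ρ)
    (hout : ∀ μ : ℂ, (μ • (1 : Matrix q q ℂ) - J₂).det = 0 → ρ < ‖μ - γ‖) :
    matrixCircleIntegral
        (fun z => (fromDiagBlocks e₁ (fromDiagBlocks e₂ (z • 1 - J₁) (z • 1 - J₂)) (z • N - 1))⁻¹)
        γ ρ =
      fromDiagBlocks e₁ (fromDiagBlocks e₂ ((2 * π * Complex.I : ℂ) • 1) 0) 0 := by
  have hJ₁ (z) (hz : z ∈ sphere γ ρ) : IsUnit (z • 1 - J₁) :=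
    isUnit_smul_one_sub hin (mem_sphere_iff_norm.1 hz).ge.not_gt
  have hJ₂ (z) (hz : z ∈ closedBall γ ρ) : IsUnit (z • 1 - J₂) :=
    isUnit_smul_one_sub hout (mem_closedBall_iff_norm.1 hz).not_gt
  have hN' (z : ℂ) : IsUnit (z • N - 1) := (hN.smul z).isUnit_sub_one
  rw [matrixCircleIntegral_inv_fromDiagBlocks e₁ hρ.le
      (fun z hz => (isUnit_fromDiagBlocks_iff e₂).2 ⟨hJ₁ z hz, hJ₂ z (sphere_subset_closedBall hz)⟩)
      fun z _ => hN' z,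
    matrixCircleIntegral_inv_fromDiagBlocks e₂ hρ.le hJ₁
      fun z hz => hJ₂ z (sphere_subset_closedBall hz),
    matrixCircleIntegral_resolvent hρ hin, matrixCircleIntegral_smul_sub_inv_eq_zero hρ.le hJ₂,
    matrixCircleIntegral_smul_sub_inv_eq_zero hρ.le fun z _ => hN' z]

theorem matrixCircleIntegral_smul_sub_inv_mul_of_weierstrass {A B S T : Matrix ι ι ℂ}
    (hS : IsUnit S) (hT : IsUnit T) (hN : IsNilpotent N)
    (hA : T * A * S = fromDiagBlocks e₁ (fromDiagBlocks e₂ J₁ J₂) 1)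
    (hB : T * B * S = fromDiagBlocks e₁ 1 N) (hρ : 0 < ρ)
    (hin : ∀ μ : ℂ, (μ • (1 : Matrix p p ℂ) - J₁).det = 0 → ‖μ - γ‖ < ρ)
    (hout : ∀ μ : ℂ, (μ • (1 : Matrix q q ℂ) - J₂).det = 0 → ρ < ‖μ - γ‖) :
    (∀ z ∈ sphere γ ρ, IsUnit (z • B - A)) ∧
      matrixCircleIntegral (fun z => (z • B - A)⁻¹ * B) γ ρ =
        (2 * π * Complex.I : ℂ) • (S * fromDiagBlocks e₁ (fromDiagBlocks e₂ 1 0) 0 * S⁻¹) := by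
  have hblocks (z : ℂ) : z • (T * B * S) - T * A * S =
      fromDiagBlocks e₁ (fromDiagBlocks e₂ (z • 1 - J₁) (z • 1 - J₂)) (z • N - 1) := by
    rw [hA, hB, smul_fromDiagBlocks_sub_fromDiagBlocks, ← fromDiagBlocks_one e₂,
      smul_fromDiagBlocks_sub_fromDiagBlocks]
  have hunit (z) (hz : z ∈ sphere γ ρ) : IsUnit (z • (T * B * S) - T * A * S) := by
    have hz' := mem_sphere_iff_norm.1 hz
    rw [hblocks, isUnit_fromDiagBlocks_iff, isUnit_fromDiagBlocks_iff]
    exact ⟨⟨isUnit_smul_one_sub hin hz'.ge.not_gt, isUnit_smul_one_sub hout hz'.le.not_gt⟩,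
      (hN.smul z).isUnit_sub_one⟩
  refine ⟨fun z hz => ?_, ?_⟩
  · have h := hunit z hz
    rw [← mul_smul_sub_mul] at h
    exact (IsUnit.mul_iff.1 (IsUnit.mul_iff.1 h).1).2
  calc matrixCircleIntegral (fun z => (z • B - A)⁻¹ * B) γ ρ
      = matrixCircleIntegral
          (fun z => S * (z • (T * B * S) - T * A * S)⁻¹ * (T * B * S * S⁻¹)) γ ρ := by
        simp only [smul_sub_inv_mul_eq A B hS hT]
    _ = S * matrixCircleIntegral (fun z => (z • (T * B * S) - T * A * S)⁻¹) γ ρ *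
          (T * B * S * S⁻¹) :=
        matrixCircleIntegral_mul_mul _ _ (circleIntegrable_smul_sub_inv_apply hρ.le hunit)
    _ = S * fromDiagBlocks e₁ (fromDiagBlocks e₂ ((2 * π * Complex.I : ℂ) • 1) 0) 0 *
          (T * B * S * S⁻¹) := by
        simp only [hblocks,
          matrixCircleIntegral_inv_fromDiagBlocks_weierstrass e₂ e₁ hN hρ hin hout]
    _ = _ := by
        rw [hB, ← Matrix.mul_assoc, Matrix.mul_assoc S, fromDiagBlocks_mul_fromDiagBlocks,
          Matrix.mul_one, Matrix.zero_mul, ← Matrix.smul_mul, ← Matrix.mul_smul,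
          smul_fromDiagBlocks, smul_fromDiagBlocks, smul_zero, smul_zero]

end Weierstrass

/-- Under a Weierstrass decomposition with `J = diag(J₁, J₂)`,
`J₁ ∈ ℂ^{s×s}` having all eigenvalues strictly inside the circle `|z−γ| = ρ` and `J₂`
having all eigenvalues strictly outside, `zB − A` is invertible on the circle and
`(1/(2π√−1)) ∮ (zB − A)⁻¹ B dz = S · diag(I_s, 0) · S⁻¹ = S_{(:,1:s)} (S⁻¹)_{(1:s,:)}`. -/
theorem stmt_7 (n d s : ℕ) (hs : s ≤ d) (hd : d ≤ n)
    (A B S T : Matrix (Fin n) (Fin n) ℂ)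
    (J : Matrix (Fin d) (Fin d) ℂ) (N : Matrix (Fin (n - d)) (Fin (n - d)) ℂ)
    (J₁ : Matrix (Fin s) (Fin s) ℂ) (J₂ : Matrix (Fin (d - s)) (Fin (d - s)) ℂ)
    (hS : IsUnit S) (hT : IsUnit T) (hN : IsNilpotent N)
    (hA : T * A * S =
      (Matrix.reindex (finSumFinEquiv.trans (finCongr (Nat.add_sub_cancel' hd)))
        (finSumFinEquiv.trans (finCongr (Nat.add_sub_cancel' hd))))
        (Matrix.fromBlocks J 0 0 1))
    (hB : T * B * S =
      (Matrix.reindex (finSumFinEquiv.trans (finCongr (Nat.add_sub_cancel' hd)))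
        (finSumFinEquiv.trans (finCongr (Nat.add_sub_cancel' hd))))
        (Matrix.fromBlocks 1 0 0 N))
    (hJ : J =
      (Matrix.reindex (finSumFinEquiv.trans (finCongr (Nat.add_sub_cancel' hs)))
        (finSumFinEquiv.trans (finCongr (Nat.add_sub_cancel' hs))))
        (Matrix.fromBlocks J₁ 0 0 J₂))
    (γ : ℂ) (ρ : ℝ) (hρ : 0 < ρ)
    (hin : ∀ μ : ℂ, (μ • (1 : Matrix (Fin s) (Fin s) ℂ) - J₁).det = 0 →
      ‖μ - γ‖ < ρ)
    (hout : ∀ μ : ℂ, (μ • (1 : Matrix (Fin (d - s)) (Fin (d - s)) ℂ) - J₂).det = 0 →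
      ρ < ‖μ - γ‖) :
    (∀ z : ℂ, ‖z - γ‖ = ρ → IsUnit (z • B - A)) ∧
    (∀ i j : Fin n,
      (1 / (2 * (Real.pi : ℂ) * Complex.I)) *
          (∮ z in C(γ, ρ), (((z • B - A)⁻¹ * B) i j)) =
        (S * (Matrix.reindex
              (finSumFinEquiv.trans (finCongr (Nat.add_sub_cancel' (hs.trans hd))))
              (finSumFinEquiv.trans (finCongr (Nat.add_sub_cancel' (hs.trans hd)))))
              (Matrix.fromBlocks (1 : Matrix (Fin s) (Fin s) ℂ) 0 0
                (0 : Matrix (Fin (n - s)) (Fin (n - s)) ℂ)) * S⁻¹) i j) ∧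
    (∀ i j : Fin n,
      (1 / (2 * (Real.pi : ℂ) * Complex.I)) *
          (∮ z in C(γ, ρ), (((z • B - A)⁻¹ * B) i j)) =
        (S.submatrix id (Fin.castLE (hs.trans hd)) *
          S⁻¹.submatrix (Fin.castLE (hs.trans hd)) id) i j) := by
  obtain ⟨hunit, hint⟩ := matrixCircleIntegral_smul_sub_inv_mul_of_weierstrass
    (finSumSubEquiv hs) (finSumSubEquiv hd) hS hT hN (hJ ▸ hA) hB hρ hin hout
  rw [fromDiagBlocks_fromDiagBlocks_one_zero] at hint
  have hentry (i j : Fin n) : 1 / (2 * (π : ℂ) * Complex.I) *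
      (∮ z in C(γ, ρ), ((z • B - A)⁻¹ * B) i j) =
        (S * fromDiagBlocks (finSumSubEquiv (hs.trans hd)) (1 : Matrix (Fin s) (Fin s) ℂ) 0 *
          S⁻¹) i j := by
    rw [← matrixCircleIntegral_apply, hint, Matrix.smul_apply, smul_eq_mul, one_div,
      inv_mul_cancel_left₀ Complex.two_pi_I_ne_zero]
  refine ⟨fun z hz => hunit z (mem_sphere_iff_norm.2 hz), hentry, fun i j => ?_⟩
  rw [hentry, fromDiagBlocks_finSumSubEquiv_one_zero, mul_diagonal_ite_lt_mul]
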